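/- arXiv:1703.06816 — 6 statements merged into one kernel-verified Lean document; each statement's English description precedes it below -/
import Mathlib

section
/- Let α be a nonzero rational number and let A = ⊕ A_n^p be a chain complex of graded vector spaces (extra grading indexed by p, homological degree n) whose homology is α-pure, i.e., H_n(A)^p = 0 whenever p ≠ αn. Define the truncation τA by (τA)_n^p = A_n^p if n > ⌈p/α⌉, (τA)_n^p = Ker(d: A_n^p → A_{n-1}^p) if n = ⌈p/α⌉, and (τA)_n^p = 0 if n < ⌈p/α⌉. Then the inclusion τA ↪ A is a quasi-isomorphism. -/
open CategoryTheory Limits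

/-! Write `c = ⌈p/α⌉`. Above `c` the inclusion is an isomorphism of chain modules, so it is a
quasi-isomorphism there. In degree `c` the truncation has zero differential and is mapped onto the
cycles, while its degree `c + 1` maps onto that of the complex, so both homologies are the same
quotient of the cycles. Below `c` the truncation vanishes, and purity makes the complex exact:
`p = α n` would force `n = p/α`, an integer, hence `n = c`. -/

/-- The truncation-submodule of a chain complex `C` at threshold `c` in degree `k`:
all of `C.X k` if `k > c`, the cycles `Ker (d : C_k → C_{k-1})` if `k = c`, and `0`
if `k < c`. -/
noncomputable def tauSubmodule (C : ChainComplex (ModuleCat ℚ) ℤ) (c k : ℤ) :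
    Submodule ℚ (C.X k) :=
  if c < k then ⊤ else if k = c then LinearMap.ker (C.d k (k - 1)).hom else ⊥

universe u v

section ModuleCat

variable {R : Type u} [Ring R]

lemma ModuleCat.isIso_of_range_eq_top {M N : ModuleCat.{v} R} (f : M ⟶ N) [Mono f]
    (hf : LinearMap.range f.hom = ⊤) : IsIso f :=
  (ConcreteCategory.isIso_iff_bijective f).2
    ⟨(ModuleCat.mono_iff_injective f).1 inferInstance, LinearMap.range_eq_top.1 hf⟩

lemma ModuleCat.isZero_of_range_eq_bot {M N : ModuleCat.{v} R} (f : M ⟶ N) [Mono f]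
    (hf : LinearMap.range f.hom = ⊥) : IsZero M := by
  obtain rfl : f = 0 := ModuleCat.hom_ext (LinearMap.range_eq_bot.1 hf)
  exact IsZero.of_mono_zero M N

lemma ShortComplex.isIso_cyclesMap_of_range_eq_ker {S₁ S₂ : ShortComplex (ModuleCat.{v} R)}
    (Φ : S₁ ⟶ S₂) (hg₁ : S₁.g = 0) [Mono Φ.τ₂]
    (hr : LinearMap.range Φ.τ₂.hom = LinearMap.ker S₂.g.hom) :
    IsIso (ShortComplex.cyclesMap Φ) := by
  have := S₁.isIso_iCycles hg₁
  have : Mono (ShortComplex.cyclesMap Φ) := mono_of_mono_fac (ShortComplex.cyclesMap_i Φ)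
  have : Epi (ShortComplex.cyclesMap Φ) := by
    rw [ModuleCat.epi_iff_surjective]
    intro z
    have hz : S₂.g (S₂.iCycles z) = 0 := by
      rw [← ConcreteCategory.comp_apply, S₂.iCycles_g]; rfl
    obtain ⟨y, hy⟩ : S₂.iCycles z ∈ LinearMap.range Φ.τ₂.hom := hr ▸ hz
    refine ⟨inv S₁.iCycles y, (ModuleCat.mono_iff_injective S₂.iCycles).1 inferInstance ?_⟩
    rw [← ConcreteCategory.comp_apply, ShortComplex.cyclesMap_i, ConcreteCategory.comp_apply,
      IsIso.inv_hom_id_apply]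
    exact hy
  exact isIso_of_mono_of_epi _

lemma ChainComplex.quasiIsoAt_of_range_eq_ker {K L : ChainComplex (ModuleCat.{v} R) ℤ}
    (φ : K ⟶ L) (n : ℤ) [Epi (φ.f (n + 1))] [Mono (φ.f n)] (hK : IsZero (K.X (n - 1)))
    (hr : LinearMap.range (φ.f n).hom = LinearMap.ker (L.d n (n - 1)).hom) :
    QuasiIsoAt φ n := by
  rw [quasiIsoAt_iff' φ (n + 1) n (n - 1) (by simp) (by simp), ShortComplex.quasiIso_iff]
  exact ShortComplex.isIso_homologyMap_of_isIso_cyclesMap_of_epi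
    (@ShortComplex.isIso_cyclesMap_of_range_eq_ker _ _ _ _ _ (hK.eq_of_tgt _ _) ‹Mono (φ.f n)› hr)
    ‹Epi (φ.f (n + 1))›

end ModuleCat

section ChainComplex

variable {C : Type u} [Category.{v} C] [HasZeroMorphisms C] [CategoryWithHomology C]
  {K L : ChainComplex C ℤ} (φ : K ⟶ L) (n : ℤ)

lemma ChainComplex.quasiIsoAt_of_epi_of_isIso_of_mono [Epi (φ.f (n + 1))] [IsIso (φ.f n)]
    [Mono (φ.f (n - 1))] : QuasiIsoAt φ n := by
  rw [quasiIsoAt_iff' φ (n + 1) n (n - 1) (by simp) (by simp)]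
  exact @ShortComplex.quasiIso_of_epi_of_isIso_of_mono _ _ _ _ _ _ _ _
    ‹Epi (φ.f (n + 1))› ‹IsIso (φ.f n)› ‹Mono (φ.f (n - 1))›

lemma HomologicalComplex.quasiIsoAt_of_isZero_X (hK : IsZero (K.X n)) (hL : L.ExactAt n) :
    QuasiIsoAt φ n :=
  (quasiIsoAt_iff_exactAt φ n (ShortComplex.exact_of_isZero_X₂ _ hK)).2 hL

end ChainComplex

lemma tauSubmodule_of_lt (C : ChainComplex (ModuleCat ℚ) ℤ) {c k : ℤ} (hk : c < k) :
    tauSubmodule C c k = ⊤ :=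
  if_pos hk

lemma tauSubmodule_self (C : ChainComplex (ModuleCat ℚ) ℤ) (c : ℤ) :
    tauSubmodule C c c = LinearMap.ker (C.d c (c - 1)).hom := by
  simp [tauSubmodule]

lemma tauSubmodule_of_gt (C : ChainComplex (ModuleCat ℚ) ℤ) {c k : ℤ} (hk : k < c) :
    tauSubmodule C c k = ⊥ := by
  simp [tauSubmodule, hk.not_gt, hk.ne]

theorem ChainComplex.quasiIso_of_range_eq_tauSubmodule {K C : ChainComplex (ModuleCat ℚ) ℤ}
    (φ : K ⟶ C) (c : ℤ) (hmono : ∀ k, Mono (φ.f k))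
    (hrange : ∀ k, LinearMap.range (φ.f k).hom = tauSubmodule C c k)
    (hexact : ∀ n < c, C.ExactAt n) : QuasiIso φ := by
  have hiso (k : ℤ) (hk : c < k) : IsIso (φ.f k) :=
    ModuleCat.isIso_of_range_eq_top _ ((hrange k).trans (tauSubmodule_of_lt C hk))
  have hzero (k : ℤ) (hk : k < c) : IsZero (K.X k) :=
    ModuleCat.isZero_of_range_eq_bot _ ((hrange k).trans (tauSubmodule_of_gt C hk))
  refine ⟨fun n => ?_⟩
  rcases lt_trichotomy n c with hn | rfl | hn
  · exact HomologicalComplex.quasiIsoAt_of_isZero_X φ n (hzero n hn) (hexact n hn)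
  · have := hiso (n + 1) (by omega)
    exact ChainComplex.quasiIsoAt_of_range_eq_ker φ n (hzero _ (by omega))
      ((hrange n).trans (tauSubmodule_self C n))
  · have := hiso (n + 1) (by omega)
    have := hiso n hn
    exact ChainComplex.quasiIsoAt_of_epi_of_isIso_of_mono φ n

lemma ne_mul_of_lt_ceil_div {𝕜 : Type*} [Field 𝕜] [LinearOrder 𝕜] [IsStrictOrderedRing 𝕜]
    [FloorRing 𝕜] {α p : 𝕜} (hα : α ≠ 0) {n : ℤ} (hn : n < ⌈p / α⌉) : p ≠ α * n := by
  rintro rfl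
  rw [mul_div_cancel_left₀ _ hα, Int.ceil_intCast] at hn
  exact hn.false

/-- Let `α` be a nonzero rational number and let `A = ⊕ A_n^p` be a chain complex of
graded vector spaces (encoded as a family, over the extra grading `p : ℤ`, of chain
complexes `A p`) whose homology is `α`-pure: `H_n(A)^p = 0` whenever `p ≠ α n`.
Let `τA` be the canonical truncation, encoded as a degreewise-injective morphism
`ι p : K p ⟶ A p` whose image in degree `k` is: everything for `k > ⌈p/α⌉`, the
cycles for `k = ⌈p/α⌉`, and `0` for `k < ⌈p/α⌉`.  Then the inclusion `τA ↪ A` is a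
quasi-isomorphism. -/
theorem truncation_inclusion_quasiIso (α : ℚ) (hα : α ≠ 0)
    (A K : ℤ → ChainComplex (ModuleCat ℚ) ℤ)
    (hpure : ∀ p n : ℤ, (p : ℚ) ≠ α * (n : ℚ) → IsZero ((A p).homology n))
    (ι : ∀ p, K p ⟶ A p)
    (hmono : ∀ p k, Mono ((ι p).f k))
    (hrange : ∀ p k, LinearMap.range ((ι p).f k).hom = tauSubmodule (A p) ⌈(p : ℚ) / α⌉ k)
    (p : ℤ) : QuasiIso (ι p) :=
  ChainComplex.quasiIso_of_range_eq_tauSubmodule (ι p) _ (hmono p) (hrange p) fun n hn =>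
    (HomologicalComplex.exactAt_iff_isZero_homology _ _).2 (hpure p n (ne_mul_of_lt_ceil_div hα hn))
end

section
/- Let α be a nonzero rational number. For graded chain complexes A and B (chain complexes of graded vector spaces), the truncation τ satisfies τ(A)_n^p ⊗ τ(B)_m^q ⊆ τ(A⊗B)_{n+m}^{p+q}; hence τ is a lax symmetric monoidal endofunctor of graded chain complexes. -/
open CategoryTheory Limits MonoidalCategory HomologicalComplex

noncomputable instance : (ComplexShape.down ℤ).TensorSigns where
  ε' := MonoidHom.mk' Int.negOnePow Int.negOnePow_add
  rel_add p q r (hpq : q + 1 = p) := by simp only [ComplexShape.down_Rel]; omega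
  add_rel p q r (hpq : q + 1 = p) := by simp only [ComplexShape.down_Rel]; omega
  ε'_succ := by
    rintro p q rfl
    show Int.negOnePow q = - Int.negOnePow (q + 1)
    rw [Int.negOnePow_succ]
    simp

instance {C : Type*} [Category C] [MonoidalCategory C] [Preadditive C] [MonoidalPreadditive C] :
    (curriedTensor C).Additive where
  map_add := by
    intros
    ext X
    exact MonoidalPreadditive.add_whiskerRight ..

instance {C : Type*} [Category C] [MonoidalCategory C] [Preadditive C] [MonoidalPreadditive C]
    (X : C) : ((curriedTensor C).obj X).Additive where
  map_add := by
    intros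
    exact MonoidalPreadditive.whiskerLeft_add ..

/-!
Raising the threshold only shrinks the truncation, and
`⌈(p+q)/α⌉ ≤ ⌈p/α⌉ + ⌈q/α⌉`, so it suffices to land in the truncation of `A ⊗ B` at threshold
`⌈p/α⌉ + ⌈q/α⌉`. For a chain map `φ`, landing in the truncation at threshold `c` just means
`φ_i = 0` for `i < c`: in degree `c` the image consists of cycles because
`φ_c ≫ d = d ≫ φ_{c-1} = 0`. That vanishing condition is visibly additive under the tensor
product, since a summand `A_i ⊗ B_j` of `(A ⊗ B)_k` with `k < a + b` has `i < a` or `j < b`.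
-/

lemma tensorHom_f_eq_zero_of_lt {C : Type*} [Category C] [MonoidalCategory C] [Preadditive C]
    [MonoidalPreadditive C] {K₁ K₂ L₁ L₂ : ChainComplex C ℤ} [HasTensor K₁ K₂] [HasTensor L₁ L₂]
    (f₁ : K₁ ⟶ L₁) (f₂ : K₂ ⟶ L₂) {a b : ℤ} (h₁ : ∀ i < a, f₁.f i = 0) (h₂ : ∀ i < b, f₂.f i = 0)
    {k : ℤ} (hk : k < a + b) : (HomologicalComplex.tensorHom f₁ f₂).f k = 0 := by
  refine mapBifunctor.hom_ext fun i₁ i₂ hi => ?_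
  change i₁ + i₂ = k at hi
  rw [comp_zero, HomologicalComplex.tensorHom, ι_mapBifunctorMap]
  rcases lt_or_ge i₁ a with hi₁ | hi₁
  · rw [h₁ i₁ hi₁, Functor.map_zero, zero_app, zero_comp]
  · rw [h₂ i₂ (by omega), Functor.map_zero, zero_comp, comp_zero]

lemma tauSubmodule_anti (K : ChainComplex (ModuleCat ℚ) ℤ) {c c' : ℤ} (h : c ≤ c') (k : ℤ) :
    tauSubmodule K c' k ≤ tauSubmodule K c k := by
  unfold tauSubmodule
  split_ifs <;> first | rfl | exact le_top | exact bot_le | omega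

lemma f_eq_zero_of_range_le_tauSubmodule {K L : ChainComplex (ModuleCat ℚ) ℤ} (φ : K ⟶ L)
    {c k : ℤ} (h : LinearMap.range (φ.f k).hom ≤ tauSubmodule L c k) (hk : k < c) : φ.f k = 0 := by
  rw [tauSubmodule, if_neg (by omega), if_neg (by omega), le_bot_iff, LinearMap.range_eq_bot] at h
  exact ModuleCat.hom_ext h

lemma range_le_tauSubmodule_of_f_eq_zero {K L : ChainComplex (ModuleCat ℚ) ℤ} (φ : K ⟶ L)
    {c : ℤ} (h : ∀ i < c, φ.f i = 0) (k : ℤ) :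
    LinearMap.range (φ.f k).hom ≤ tauSubmodule L c k := by
  unfold tauSubmodule
  split_ifs with hck hkc
  · exact le_top
  · subst hkc
    rw [LinearMap.range_le_ker_iff, ← ModuleCat.hom_comp, φ.comm, h (k - 1) (by omega), comp_zero,
      ModuleCat.hom_zero]
  · rw [h k (by omega), ModuleCat.hom_zero, LinearMap.range_zero]

theorem truncation_lax_monoidal_general (α : ℚ)
    (CA CB KA KB : ChainComplex (ModuleCat ℚ) ℤ) (p q : ℤ)
    (ιA : KA ⟶ CA) (ιB : KB ⟶ CB)
    (hA : ∀ k : ℤ, LinearMap.range (ιA.f k).hom = tauSubmodule CA ⌈(p : ℚ) / α⌉ k)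
    (hB : ∀ k : ℤ, LinearMap.range (ιB.f k).hom = tauSubmodule CB ⌈(q : ℚ) / α⌉ k)
    (k : ℤ) :
    LinearMap.range ((HomologicalComplex.tensorHom ιA ιB).f k).hom
      ≤ tauSubmodule (HomologicalComplex.tensorObj CA CB) ⌈((p : ℚ) + (q : ℚ)) / α⌉ k := by
  have hceil : ⌈((p : ℚ) + q) / α⌉ ≤ ⌈(p : ℚ) / α⌉ + ⌈(q : ℚ) / α⌉ := by
    rw [add_div]
    exact Int.ceil_add_le _ _
  have hιA (i : ℤ) (hi : i < ⌈(p : ℚ) / α⌉) : ιA.f i = 0 :=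
    f_eq_zero_of_range_le_tauSubmodule ιA (hA i).le hi
  have hιB (i : ℤ) (hi : i < ⌈(q : ℚ) / α⌉) : ιB.f i = 0 :=
    f_eq_zero_of_range_le_tauSubmodule ιB (hB i).le hi
  calc LinearMap.range ((HomologicalComplex.tensorHom ιA ιB).f k).hom
      ≤ tauSubmodule _ (⌈(p : ℚ) / α⌉ + ⌈(q : ℚ) / α⌉) k :=
        range_le_tauSubmodule_of_f_eq_zero _
          (fun _ hi => tensorHom_f_eq_zero_of_lt ιA ιB hιA hιB hi) k
    _ ≤ _ := tauSubmodule_anti _ hceil k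

/-- Let `α ≠ 0` be rational.  For graded chain complexes, the truncation `τ` (with
threshold `⌈p/α⌉` on the piece of extra grading `p`) satisfies
`τ(A)_n^p ⊗ τ(B)_m^q ⊆ τ(A⊗B)_{n+m}^{p+q}`: if `ιA : KA ⟶ CA` and `ιB : KB ⟶ CB`
are the inclusions of the truncations of the graded pieces of weights `p` and `q`
(characterized by their degreewise images), then in every degree `k` the image of
`ιA ⊗ ιB` is contained in the truncation-submodule of `CA ⊗ CB` at threshold
`⌈(p+q)/α⌉`; hence `τ` is lax symmetric monoidal. -/
theorem truncation_lax_monoidal (α : ℚ) (hα : α ≠ 0)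
    (CA CB KA KB : ChainComplex (ModuleCat ℚ) ℤ) (p q : ℤ)
    (ιA : KA ⟶ CA) (ιB : KB ⟶ CB)
    (hA : ∀ k : ℤ, LinearMap.range (ιA.f k).hom = tauSubmodule CA ⌈(p : ℚ) / α⌉ k)
    (hB : ∀ k : ℤ, LinearMap.range (ιB.f k).hom = tauSubmodule CB ⌈(q : ℚ) / α⌉ k)
    (k : ℤ) :
    LinearMap.range ((HomologicalComplex.tensorHom ιA ιB).f k).hom
      ≤ tauSubmodule (HomologicalComplex.tensorObj CA CB) ⌈((p : ℚ) + (q : ℚ)) / α⌉ k :=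
  truncation_lax_monoidal_general α CA CB KA KB p q ιA ιB hA hB k
end

section
/- Let V be a finite-dimensional vector space over a field k of characteristic zero with a finite exhaustive increasing filtration W. Suppose there exists α ∈ k* which is not a root of unity and a filtration-preserving automorphism Φ of V such that the induced map on Gr^W V acts as multiplication by α^p on Gr^W_p V. Then setting V_p := Ker(Φ_s − α^p · id), where Φ_s is the semisimple part of Φ, one has V = ⊕_p V_p and W_p V = ⊕_{q ≤ p} V_q; in particular the filtration W splits. -/
/-!
The graded condition says `(Φ - α^p) W_p ⊆ W_{p-1}`, so `∏_{a < q ≤ p} (Φ - α^q)` kills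
`W_p` once `W_a = 0`. As `α` is not a root of unity the `α^q` are pairwise distinct, so this
polynomial is separable: `Φ` is semisimple, hence equal to its semisimple part `Φs`, and `W_p`
lies in the sum of the `α^q`-eigenspaces with `q ≤ p`. Conversely, an `α^q`-eigenvector lying
in `W_r` with `r > q` lies in `W_{r-1}`, hence in `W_q`.
-/

open Polynomial

namespace Module.End

variable {K M : Type*} [Field K] [AddCommGroup M] [Module K M]

lemma ker_aeval_X_sub_C (f : End K M) (μ : K) :
    LinearMap.ker (aeval f (X - C μ)) = f.eigenspace μ := by
  rw [eigenspace_def, map_sub, aeval_X, aeval_C, algebraMap_end_eq_smul_id]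
  rfl

lemma ker_aeval_prod_X_sub_C {ι : Type*} (f : End K M) (c : ι → K) (s : Finset ι)
    (hc : Set.InjOn c s) :
    LinearMap.ker (aeval f (∏ i ∈ s, (X - C (c i)))) = ⨆ i ∈ s, f.eigenspace (c i) := by
  classical
  induction s using Finset.induction_on with
  | empty =>
    simp only [Finset.prod_empty, map_one, Finset.notMem_empty, iSup_false, iSup_bot]
    exact LinearMap.ker_id (R := K) (M := M)
  | insert r t hr ih =>
    have hcop : IsCoprime (X - C (c r)) (∏ i ∈ t, (X - C (c i))) :=
      IsCoprime.prod_right fun i hi => isCoprime_X_sub_C_of_isUnit_sub <| Ne.isUnit <|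
        sub_ne_zero.2 fun h => hr (hc (by simp) (by simp [hi]) h ▸ hi)
    rw [Finset.prod_insert hr, ← sup_ker_aeval_eq_ker_aeval_mul_of_coprime f hcop,
      ker_aeval_X_sub_C, ih (hc.mono (by simp)), Finset.iSup_insert]

theorem IsSemisimple.eq_of_eq_mul_of_isNilpotent_sub_one [PerfectField K]
    [FiniteDimensional K M] {f s u : End K M} (hf : f.IsSemisimple) (hs : s.IsSemisimple)
    (hu : IsNilpotent (u - 1)) (hsu : Commute s u) (h : f = s * u) : s = f := by
  have hsu₁ : Commute s (u - 1) := hsu.sub_right (Commute.one_right s)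
  -- `f = s (u - 1) + s` and `f = 0 + f` are both Jordan-Chevalley decompositions.
  refine (isNilpotent_isSemisimple_unique (hsu₁.isNilpotent_mul_left hu) hs
    IsNilpotent.zero hf ((Commute.refl s).mul_left hsu₁.symm) (Commute.zero_left f) ?_).2
  rw [h, mul_sub, mul_one, sub_add_cancel, zero_add]

section Filtration

variable {W : ℤ → Submodule K M} {f : End K M} {c : ℤ → K}

lemma filtration_le_ker_aeval_prod_Ioc (hW : Monotone W)
    (hgr : ∀ p, ∀ x ∈ W p, f x - c p • x ∈ W (p - 1)) {a : ℤ} (ha : W a = ⊥)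
    (p : ℤ) :
    W p ≤ LinearMap.ker (aeval f (∏ q ∈ Finset.Ioc a p, (X - C (c q)))) := by
  rcases lt_or_ge p a with hpa | hap
  · exact (hW hpa.le).trans (ha ▸ bot_le)
  induction p, hap using Int.leInduction with
  | base => simp [ha]
  | succ p hap ih =>
    intro x hx
    have hstep : aeval f (X - C (c (p + 1))) x ∈ W p := by
      simpa using hgr (p + 1) x hx
    rw [← Finset.insert_Ioc_right_eq_Ioc_add_one hap,
      Finset.prod_insert (by simp), mul_comm, LinearMap.mem_ker, aeval_mul, mul_apply]
    exact ih hstep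

lemma eigenspace_le_filtration (hW : Monotone W)
    (hgr : ∀ p, ∀ x ∈ W p, f x - c p • x ∈ W (p - 1)) {b : ℤ} (hb : W b = ⊤)
    (hc : Function.Injective c) (q : ℤ) :
    f.eigenspace (c q) ≤ W q := by
  intro v hv
  have hfv : f v = c q • v := mem_eigenspace_iff.1 hv
  have descend : ∀ r, q ≤ r → v ∈ W r → v ∈ W q := by
    intro r hqr
    induction r, hqr using Int.leInduction with
    | base => exact id
    | succ r hqr ih =>
      intro hv'
      have hmem := hgr (r + 1) v hv'
      rw [hfv, ← sub_smul, add_sub_cancel_right] at hmem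
      exact ih ((Submodule.smul_mem_iff _ (sub_ne_zero.2 (hc.ne (by omega)))).1 hmem)
  exact descend (max q b) (le_max_left q b) (hW (le_max_right q b) (hb ▸ Submodule.mem_top))

lemma filtration_eq_iSup_eigenspace (hW : Monotone W)
    (hgr : ∀ p, ∀ x ∈ W p, f x - c p • x ∈ W (p - 1)) {a b : ℤ} (ha : W a = ⊥)
    (hb : W b = ⊤) (hc : Function.Injective c) (p : ℤ) :
    W p = ⨆ q ≤ p, f.eigenspace (c q) := by
  refine le_antisymm ?_ <|
    iSup₂_le fun q hq => (eigenspace_le_filtration hW hgr hb hc q).trans (hW hq)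
  calc W p ≤ ⨆ q ∈ Finset.Ioc a p, f.eigenspace (c q) :=
        ker_aeval_prod_X_sub_C f c _ hc.injOn ▸ filtration_le_ker_aeval_prod_Ioc hW hgr ha p
    _ ≤ ⨆ q ≤ p, f.eigenspace (c q) := biSup_mono fun q hq => (Finset.mem_Ioc.1 hq).2

lemma isSemisimple_of_filtration (hW : Monotone W)
    (hgr : ∀ p, ∀ x ∈ W p, f x - c p • x ∈ W (p - 1)) {a b : ℤ} (ha : W a = ⊥)
    (hb : W b = ⊤) (hc : Function.Injective c) : f.IsSemisimple := by
  have hsep : (∏ q ∈ Finset.Ioc a b, (X - C (c q))).Separable :=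
    separable_prod_X_sub_C_iff'.2 fun _ _ _ _ h => hc h
  have hker := filtration_le_ker_aeval_prod_Ioc hW hgr ha b
  rw [hb, top_le_iff, LinearMap.ker_eq_top] at hker
  exact isSemisimple_of_squarefree_aeval_eq_zero hsep.squarefree hker

lemma isInternal_eigenspace_of_filtration (hW : Monotone W)
    (hgr : ∀ p, ∀ x ∈ W p, f x - c p • x ∈ W (p - 1)) {a b : ℤ} (ha : W a = ⊥)
    (hb : W b = ⊤) (hc : Function.Injective c) :
    DirectSum.IsInternal fun q => f.eigenspace (c q) := by
  refine (DirectSum.isInternal_submodule_iff_iSupIndep_and_iSup_eq_top _).2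
    ⟨(eigenspaces_iSupIndep f).comp hc, top_le_iff.1 ?_⟩
  rw [← hb, filtration_eq_iSup_eigenspace hW hgr ha hb hc b]
  exact iSup₂_le fun q _ => le_iSup (fun q => f.eigenspace (c q)) q

end Filtration

end Module.End

theorem filtration_splits_of_grading_automorphism_general
    (k V : Type) [Field k] [CharZero k]
    [AddCommGroup V] [Module k V] [FiniteDimensional k V]
    (W : ℤ → Submodule k V) (hmono : Monotone W)
    (hbot : ∃ a : ℤ, W a = ⊥) (htop : ∃ b : ℤ, W b = ⊤)
    (α : kˣ) (hα : ∀ n : ℕ, n ≠ 0 → α ^ n ≠ 1)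
    (Φ : V ≃ₗ[k] V)
    (hgr : ∀ p : ℤ, ∀ x ∈ W p, Φ x - ((α ^ p : kˣ) : k) • x ∈ W (p - 1))
    (Φs Φu : Module.End k V)
    (hs : Φs.IsSemisimple)
    (hu : IsNilpotent (Φu - 1))
    (hcomm : Commute Φs Φu)
    (hdec : (Φ : V →ₗ[k] V) = Φs * Φu) :
    DirectSum.IsInternal
        (fun p : ℤ =>
          LinearMap.ker (Φs - ((α ^ p : kˣ) : k) • (1 : Module.End k V))) ∧
      ∀ p : ℤ, W p = ⨆ q : ℤ, ⨆ _ : q ≤ p,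
        LinearMap.ker (Φs - ((α ^ q : kˣ) : k) • (1 : Module.End k V)) := by
  obtain ⟨a, ha⟩ := hbot
  obtain ⟨b, hb⟩ := htop
  have hαfin : ¬IsOfFinOrder α := fun h =>
    let ⟨n, hn, hαn⟩ := isOfFinOrder_iff_pow_eq_one.1 h
    hα n hn.ne' hαn
  have hc : Function.Injective fun q : ℤ => ((α ^ q : kˣ) : k) :=
    Units.val_injective.comp (injective_zpow_iff_not_isOfFinOrder.2 hαfin)
  have hΦ : Module.End.IsSemisimple (Φ : Module.End k V) :=
    Module.End.isSemisimple_of_filtration hmono hgr ha hb hc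
  rw [hΦ.eq_of_eq_mul_of_isNilpotent_sub_one hs hu hcomm hdec]
  simp only [← Module.End.eigenspace_def]
  exact ⟨Module.End.isInternal_eigenspace_of_filtration hmono hgr ha hb hc,
    Module.End.filtration_eq_iSup_eigenspace hmono hgr ha hb hc⟩

/-- Let `V` be a finite-dimensional vector space over an algebraically closed field
`k` of characteristic zero with a finite exhaustive increasing filtration `W`.
Suppose `α ∈ kˣ` is not a root of unity and `Φ` is a filtration-preserving
automorphism of `V` which induces multiplication by `α^p` on `Gr^W_p V`
(i.e. `Φ x - α^p • x ∈ W_{p-1}` for `x ∈ W_p`).  Let `Φ = Φs * Φu` be the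
multiplicative Jordan decomposition, with `Φs` semisimple, `Φu` unipotent and
`Φs`, `Φu` commuting.  Then, setting `V_p := Ker (Φs - α^p • id)`, the family
`(V_p)` gives a direct sum decomposition `V = ⊕_p V_p` and
`W_p V = ⊕_{q ≤ p} V_q`; in particular the filtration `W` splits. -/
theorem filtration_splits_of_grading_automorphism
    (k V : Type) [Field k] [CharZero k] [IsAlgClosed k]
    [AddCommGroup V] [Module k V] [FiniteDimensional k V]
    (W : ℤ → Submodule k V) (hmono : Monotone W)
    (hbot : ∃ a : ℤ, W a = ⊥) (htop : ∃ b : ℤ, W b = ⊤)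
    (α : kˣ) (hα : ∀ n : ℕ, n ≠ 0 → α ^ n ≠ 1)
    (Φ : V ≃ₗ[k] V)
    (hΦW : ∀ p : ℤ, ∀ x ∈ W p, Φ x ∈ W p)
    (hgr : ∀ p : ℤ, ∀ x ∈ W p, Φ x - ((α ^ p : kˣ) : k) • x ∈ W (p - 1))
    (Φs Φu : Module.End k V)
    (hs : Φs.IsSemisimple)
    (hu : IsNilpotent (Φu - 1))
    (hcomm : Commute Φs Φu)
    (hdec : (Φ : V →ₗ[k] V) = Φs * Φu) :
    DirectSum.IsInternal
        (fun p : ℤ =>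
          LinearMap.ker (Φs - ((α ^ p : kˣ) : k) • (1 : Module.End k V))) ∧
      ∀ p : ℤ, W p = ⨆ q : ℤ, ⨆ _ : q ≤ p,
        LinearMap.ker (Φs - ((α ^ q : kˣ) : k) • (1 : Module.End k V)) :=
  filtration_splits_of_grading_automorphism_general k V W hmono hbot htop α hα Φ hgr Φs Φu hs hu
    hcomm hdec
end

section
/- Let V be a finite-dimensional filtered vector space with finite exhaustive filtration W over a field k of characteristic zero, let α ∈ k* be a non-root-of-unity, and let Φ be a filtration-preserving automorphism with gr(Φ) = ψ_α (multiplication by α^p on Gr_p^W). If x ∈ V satisfies Φ_s(x) = α^p x (Φ_s the semisimple part of Φ), and q is the smallest integer with x ∈ W_q V, then q = p. -/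
/-- Let `V` be a finite-dimensional filtered vector space with finite exhaustive
increasing filtration `W` over a field `k` of characteristic zero, let `α ∈ kˣ`
be a non-root-of-unity, and let `Φ` be a filtration-preserving automorphism with
`gr(Φ) = ψ_α` (multiplication by `α^p` on `Gr_p^W`).  Let `Φ = Φs * Φu` be the
Jordan decomposition; the semisimple part `Φs` also preserves `W` and induces
`ψ_α` on the associated graded.  If `x ≠ 0` satisfies `Φs x = α^p • x` and `q` is
the smallest integer with `x ∈ W_q V`, then `q = p`. -/
theorem weight_of_eigenvector
    (k V : Type) [Field k] [CharZero k] [IsAlgClosed k]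
    [AddCommGroup V] [Module k V] [FiniteDimensional k V]
    (W : ℤ → Submodule k V) (hmono : Monotone W)
    (hbot : ∃ a : ℤ, W a = ⊥) (htop : ∃ b : ℤ, W b = ⊤)
    (α : kˣ) (hα : ∀ n : ℕ, n ≠ 0 → α ^ n ≠ 1)
    (Φ : V ≃ₗ[k] V)
    (hΦW : ∀ r : ℤ, ∀ y ∈ W r, Φ y ∈ W r)
    (hgr : ∀ r : ℤ, ∀ y ∈ W r, Φ y - ((α ^ r : kˣ) : k) • y ∈ W (r - 1))
    (Φs Φu : Module.End k V)
    (hs : Φs.IsSemisimple)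
    (hu : IsNilpotent (Φu - 1))
    (hcomm : Commute Φs Φu)
    (hdec : (Φ : V →ₗ[k] V) = Φs * Φu)
    (hΦsW : ∀ r : ℤ, ∀ y ∈ W r, Φs y ∈ W r)
    (hΦsgr : ∀ r : ℤ, ∀ y ∈ W r, Φs y - ((α ^ r : kˣ) : k) • y ∈ W (r - 1))
    (x : V) (hx : x ≠ 0) (p q : ℤ)
    (hxp : Φs x = ((α ^ p : kˣ) : k) • x)
    (hq : IsLeast {m : ℤ | x ∈ W m} q) :
    q = p := by
  have hx1 : x ∈ W q := hq.1
  have h2 := hΦsgr q x hx1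
  rw [hxp] at h2
  have h3 : (((α ^ p : kˣ) : k) - ((α ^ q : kˣ) : k)) • x ∈ W (q - 1) := by
    rwa [← sub_smul] at h2
  by_contra hne
  have hc : (((α ^ p : kˣ) : k) - ((α ^ q : kˣ) : k)) ≠ 0 := by
    intro h
    have hpq : (α ^ p : kˣ) = (α ^ q : kˣ) := Units.ext (sub_eq_zero.mp h)
    have h1 : α ^ (p - q) = 1 := by
      rw [zpow_sub, hpq, mul_inv_cancel]
    have hn : (p - q).natAbs ≠ 0 := by omega
    apply hα _ hn
    rcases Int.natAbs_eq (p - q) with he | he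
    · rw [← zpow_natCast, ← he, h1]
    · have : α ^ (q - p) = 1 := by
        rw [show q - p = -(p - q) by ring, zpow_neg, h1, inv_one]
      rw [← zpow_natCast, show ((p - q).natAbs : ℤ) = q - p by omega, this]
  have h4 : x ∈ W (q - 1) := by
    have := (W (q - 1)).smul_mem (((α ^ p : kˣ) : k) - ((α ^ q : kˣ) : k))⁻¹ h3
    rwa [smul_smul, inv_mul_cancel₀ hc, one_smul] at this
  have := hq.2 h4
  omega
end

section
/- Let (V, W, F) be a mixed Hodge structure over a subfield k of ℝ. Define I^{p,q}(V) = (F^p ∩ W_{p+q})(V_ℂ) ∩ ( (F̄^q ∩ W_{p+q})(V_ℂ) + Σ_{i>0} (F̄^{q-i} ∩ W_{p+q-1-i})(V_ℂ) ). Then V_ℂ = ⊕_{p,q} I^{p,q}(V) and W_m V_ℂ = ⊕_{p+q ≤ m} I^{p,q}(V) (Deligne's splitting). -/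
/-!
Each graded piece `Gr^W_m` is the direct sum of its Hodge pieces `H^{p,q} = F^p ∩ F̄^q`,
`p + q = m`. The class map `I^{p,q} → Gr^W_{p+q}` lands in `H^{p,q}`, and it is injective:
`I^{p,q} ∩ W_{p+q-1}` lies in `F^p ∩ Σ_{j ≥ 0} F̄^{q-j} ∩ W_{p+q-1-j}`, which vanishes by
induction on the weight because `F^p ∩ F̄^b = 0` on `Gr_n` whenever `p + b > n`. It is also
surjective: a lift in `F^p` of a class of `H^{p,q}` is corrected weight by weight downwards, using
that `F^p` and `F̄^{k-p+1}` span `Gr_k`, until it lies in `I^{p,q}`. Finally, subspaces that map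
isomorphically onto a splitting of every graded piece of a filtration bounded below split the
filtration itself.
-/

/-- The `m`-th graded piece `Gr^W_m V = W_m / W_{m-1}` of a filtered vector space. -/
abbrev grW {V : Type} [AddCommGroup V] [Module ℂ V] (W : ℤ → Submodule ℂ V) (m : ℤ) :=
  ↥(W m) ⧸ (Submodule.comap (W m).subtype (W (m - 1)))

/-- The filtration induced by a filtration `S` on the graded piece `Gr^W_m V`. -/
noncomputable def grFil {V : Type} [AddCommGroup V] [Module ℂ V]
    (W S : ℤ → Submodule ℂ V) (m p : ℤ) : Submodule ℂ (grW W m) :=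
  Submodule.map (Submodule.comap (W m).subtype (W (m - 1))).mkQ
    (Submodule.comap (W m).subtype (S p))

/-- A mixed Hodge structure, encoded on the complexification: a finite-dimensional
complex vector space `V` with a finite exhaustive increasing weight filtration `W`,
a finite decreasing Hodge filtration `F` and its conjugate filtration `G = F̄`,
such that for each `m` the filtrations induced by `F` and `G` on `Gr^W_m V` define
a pure Hodge structure of weight `m`, i.e. a bigrading
`Gr^W_m V = ⊕_{p+q=m} F^p ∩ G^q`. -/
structure IsMHS {V : Type} [AddCommGroup V] [Module ℂ V]
    (W F G : ℤ → Submodule ℂ V) : Prop where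
  fin : FiniteDimensional ℂ V
  monoW : Monotone W
  antiF : Antitone F
  antiG : Antitone G
  w_bot : ∃ a : ℤ, W a = ⊥
  w_top : ∃ b : ℤ, W b = ⊤
  f_top : ∃ a : ℤ, F a = ⊤
  f_bot : ∃ b : ℤ, F b = ⊥
  g_top : ∃ a : ℤ, G a = ⊤
  g_bot : ∃ b : ℤ, G b = ⊥
  pure : ∀ m : ℤ, DirectSum.IsInternal
    (fun p : ℤ => grFil W F m p ⊓ grFil W G m (m - p))

/-- Deligne's subspace
`I^{p,q} = (F^p ∩ W_{p+q}) ∩ ((F̄^q ∩ W_{p+q}) + Σ_{i>0} (F̄^{q-i} ∩ W_{p+q-1-i}))`. -/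
noncomputable def deligneI {V : Type} [AddCommGroup V] [Module ℂ V]
    (W F G : ℤ → Submodule ℂ V) (p q : ℤ) : Submodule ℂ V :=
  (F p ⊓ W (p + q)) ⊓
    ((G q ⊓ W (p + q)) ⊔
      ⨆ i : ℕ, (G (q - ((i : ℤ) + 1)) ⊓ W (p + q - 2 - (i : ℤ))))

open Submodule

section Filtration

variable {R M : Type*} [Ring R] [AddCommGroup M] [Module R M]

/-- `Gr^W_m X`, realised in `M ⧸ W_{m-1}` rather than in `W_m ⧸ W_{m-1}`, so that no subtype of
`M` is involved. -/
def grPart (W : ℤ → Submodule R M) (m : ℤ) (X : Submodule R M) : Submodule R (M ⧸ W (m - 1)) :=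
  (X ⊓ W m).map (W (m - 1)).mkQ

variable {W : ℤ → Submodule R M} {m : ℤ} {X Y : Submodule R M}

lemma grPart_mono (hXY : X ≤ Y) : grPart W m X ≤ grPart W m Y :=
  map_mono (inf_le_inf_right _ hXY)

lemma grPart_le_grPart_iff (hW : W (m - 1) ≤ W m) :
    grPart W m X ≤ grPart W m Y ↔ X ⊓ W m ≤ Y ⊔ W (m - 1) := by
  rw [grPart, map_le_iff_le_comap, grPart, comap_map_mkQ]
  constructor
  · exact fun hle => hle.trans (sup_le le_sup_right (inf_le_left.trans le_sup_left))
  · intro hle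
    calc X ⊓ W m ≤ (W (m - 1) ⊔ Y) ⊓ W m := le_inf (hle.trans_eq (sup_comm _ _)) inf_le_right
      _ = W (m - 1) ⊔ Y ⊓ W m := sup_inf_assoc_of_le _ hW

lemma grPart_eq_bot_iff : grPart W m X = ⊥ ↔ X ⊓ W m ≤ W (m - 1) := by
  rw [grPart, ← LinearMap.le_ker_iff_map, ker_mkQ]

lemma grPart_inf_grPart_le :
    grPart W m X ⊓ grPart W m Y ≤ grPart W m (X ⊓ (Y ⊓ W m ⊔ W (m - 1))) := by
  rw [← comap_le_comap_iff_of_surjective (mkQ_surjective _), comap_inf, grPart, grPart, grPart,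
    comap_map_mkQ, comap_map_mkQ, comap_map_mkQ, sup_inf_assoc_of_le _ le_sup_left]
  refine sup_le_sup_left (le_inf (le_inf (inf_le_left.trans inf_le_left) ?_) ?_) _
  · exact inf_le_right.trans (sup_comm _ _).le
  · exact inf_le_left.trans inf_le_right

lemma induction_of_eq_bot (hW : Monotone W) (hbot : ∃ a, W a = ⊥) {P : ℤ → Prop}
    (base : ∀ n, W n = ⊥ → P n) (step : ∀ n, P (n - 1) → P n) (n : ℤ) : P n := by
  obtain ⟨a, ha⟩ := hbot
  rcases le_or_gt n a with hn | hn
  · exact base n (le_bot_iff.mp (ha ▸ hW hn))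
  replace hn := hn.le
  induction n, hn using Int.leInduction with
  | base => exact base a ha
  | succ n _ ih => exact step (n + 1) (by simpa using ih)

variable {ι : Type*} {wt : ι → ℤ} {I : ι → Submodule R M}

lemma eq_zero_of_sum_mem_of_wt_eq (hIW : ∀ i, I i ≤ W (wt i))
    (hdisj : ∀ i, Disjoint (I i) (W (wt i - 1)))
    (hgr : iSupIndep fun i : {i // wt i = m} => grPart W m (I i))
    {s : Finset ι} {v : ι → M} (hs : ∀ i ∈ s, wt i = m ∧ v i ∈ I i)
    (hsum : ∑ i ∈ s, v i ∈ W (m - 1)) : ∀ i ∈ s, v i = 0 := by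
  have hcls := (iSupIndep_iff_finsetSum_eq_zero_imp_eq_zero _).1 hgr (s.subtype (wt · = m))
    (fun i => (W (m - 1)).mkQ (v i))
    (fun j hj => by
      have hvI := (hs j (Finset.mem_subtype.1 hj)).2
      exact mem_map_of_mem ⟨hvI, by simpa only [SetLike.mem_coe, j.2] using hIW _ hvI⟩)
    (by rw [Finset.sum_subtype_eq_sum_filter (fun i => (W (m - 1)).mkQ (v i)),
      Finset.filter_true_of_mem fun i hi => (hs i hi).1,
      ← map_sum, mkQ_apply, Quotient.mk_eq_zero]; exact hsum)
  intro i hi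
  obtain ⟨hwt, hvI⟩ := hs i hi
  have hvW : v i ∈ W (wt i - 1) := by
    rw [hwt, ← Quotient.mk_eq_zero, ← mkQ_apply]
    exact hcls ⟨i, hwt⟩ (Finset.mem_subtype.2 hi)
  exact disjoint_def.1 (hdisj i) _ hvI hvW

lemma iSupIndep_of_iSupIndep_grPart (hW : Monotone W) (hIW : ∀ i, I i ≤ W (wt i))
    (hdisj : ∀ i, Disjoint (I i) (W (wt i - 1)))
    (hgr : ∀ m, iSupIndep fun i : {i // wt i = m} => grPart W m (I i)) : iSupIndep I := by
  rw [iSupIndep_iff_finsetSum_eq_zero_imp_eq_zero]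
  intro s
  induction s using Finset.strongInduction with
  | H s ih =>
  intro v hv hsum
  rcases s.eq_empty_or_nonempty with rfl | hne
  · simp
  obtain ⟨i₀, hi₀, hmax⟩ := s.exists_max_image wt hne
  have hsplit := s.sum_filter_add_sum_filter_not (fun i => wt i = wt i₀) v
  have hlow : ∑ i ∈ s with ¬wt i = wt i₀, v i ∈ W (wt i₀ - 1) := by
    refine sum_mem fun i hi => ?_
    obtain ⟨his, hwt⟩ := Finset.mem_filter.1 hi
    exact hW (by have := hmax i his; omega) (hIW i (hv i his))
  have htop : ∀ i ∈ s.filter (wt · = wt i₀), v i = 0 := by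
    refine eq_zero_of_sum_mem_of_wt_eq hIW hdisj (hgr _)
      (fun i hi => ⟨(Finset.mem_filter.1 hi).2, hv i (Finset.mem_filter.1 hi).1⟩) ?_
    rw [eq_neg_of_add_eq_zero_left (hsplit.trans hsum)]
    exact neg_mem hlow
  rw [Finset.sum_eq_zero htop, zero_add] at hsplit
  have hrest := ih _ (Finset.filter_ssubset.2 ⟨i₀, hi₀, not_not.2 rfl⟩) v
    (fun i hi => hv i (Finset.mem_filter.1 hi).1) (hsplit.trans hsum)
  intro i hi
  by_cases hwt : wt i = wt i₀
  · exact htop i (Finset.mem_filter.2 ⟨hi, hwt⟩)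
  · exact hrest i (Finset.mem_filter.2 ⟨hi, hwt⟩)

lemma eq_iSup_of_le_sup (hW : Monotone W) (hbot : ∃ a, W a = ⊥) (hIW : ∀ i, I i ≤ W (wt i))
    (hspan : ∀ m, W m ≤ (⨆ i, ⨆ _ : wt i = m, I i) ⊔ W (m - 1)) (m : ℤ) :
    W m = ⨆ i, ⨆ _ : wt i ≤ m, I i := by
  refine le_antisymm ?_ (iSup₂_le fun i hi => (hIW i).trans (hW hi))
  refine induction_of_eq_bot hW hbot (P := fun m => W m ≤ ⨆ i, ⨆ _ : wt i ≤ m, I i)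
    (fun n hn => hn ▸ bot_le) (fun n ih => (hspan n).trans (sup_le ?_ (ih.trans ?_))) m
  · exact iSup₂_mono' fun i hi => ⟨i, hi.le, le_rfl⟩
  · exact iSup₂_mono' fun i hi => ⟨i, by omega, le_rfl⟩

end Filtration

section Staircase

variable {R M : Type*} [Ring R] [AddCommGroup M] [Module R M] {W G : ℤ → Submodule R M}

def staircase (W G : ℤ → Submodule R M) (b n : ℤ) : Submodule R M :=
  ⨆ j : ℕ, G (b - j) ⊓ W (n - j)

lemma staircase_le (hW : Monotone W) (b n : ℤ) : staircase W G b n ≤ W n :=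
  iSup_le fun _ => inf_le_right.trans (hW (by omega))

lemma le_staircase (hG : Antitone G) {b c k n : ℤ} (hk : k ≤ n) (hc : b - (n - k) ≤ c) :
    G c ⊓ W k ≤ staircase W G b n := by
  refine le_trans ?_ (le_iSup _ (n - k).toNat)
  rw [Int.toNat_of_nonneg (by omega), sub_sub_cancel]
  exact inf_le_inf_right _ (hG hc)

lemma staircase_eq (b n : ℤ) :
    staircase W G b n = G b ⊓ W n ⊔ staircase W G (b - 1) (n - 1) := by
  rw [staircase, ← sup_iSup_nat_succ]
  simp only [staircase, Nat.cast_zero, sub_zero, Nat.cast_succ, sub_add_eq_sub_sub_swap]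

lemma staircase_le_sup (hW : Monotone W) (b n : ℤ) : staircase W G b n ≤ G b ⊔ W (n - 1) := by
  rw [staircase_eq]
  exact sup_le_sup inf_le_left (staircase_le hW _ _)

lemma staircase_inf_le (hW : Monotone W) (hG : Antitone G) (b n : ℤ) :
    staircase W G b n ⊓ W (n - 1) ≤ staircase W G (b - 1) (n - 1) := by
  rw [staircase_eq, sup_comm, sup_inf_assoc_of_le _ (staircase_le hW _ _)]
  exact sup_le le_rfl ((inf_le_inf_right _ inf_le_left).trans (le_staircase hG le_rfl (by omega)))

lemma sup_staircase_inf_le (hW : Monotone W) (b n : ℤ) :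
    (G b ⊓ W n ⊔ staircase W G (b - 1) (n - 2)) ⊓ W (n - 1) ≤ staircase W G b (n - 1) := by
  have hT : staircase W G (b - 1) (n - 2) ≤ W (n - 1) := (staircase_le hW _ _).trans (hW (by omega))
  rw [staircase_eq b (n - 1), show n - 1 - 1 = n - 2 by ring, sup_comm, sup_inf_assoc_of_le _ hT,
    sup_comm]
  exact sup_le_sup_right (inf_le_inf_right _ inf_le_left) _

end Staircase

section Deligne

variable {V : Type} [AddCommGroup V] [Module ℂ V] {W F G : ℤ → Submodule ℂ V}

lemma deligneI_eq (p q : ℤ) : deligneI W F G p q =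
    F p ⊓ W (p + q) ⊓ (G q ⊓ W (p + q) ⊔ staircase W G (q - 1) (p + q - 2)) := by
  simp only [deligneI, staircase, sub_add_eq_sub_sub_swap]

lemma deligneI_le_W (p q : ℤ) : deligneI W F G p q ≤ W (p + q) :=
  inf_le_left.trans inf_le_right

lemma grPart_deligneI_le (hW : Monotone W) {p q m : ℤ} (hm : p + q = m) :
    grPart W m (deligneI W F G p q) ≤ grPart W m (F p) ⊓ grPart W m (G q) := by
  subst hm
  refine le_inf (grPart_mono (inf_le_left.trans inf_le_left))
    ((grPart_le_grPart_iff (hW (by omega))).2 (inf_le_left.trans ?_))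
  rw [deligneI_eq]
  exact inf_le_right.trans (sup_le_sup inf_le_left ((staircase_le hW _ _).trans (hW (by omega))))

def grEmb (W : ℤ → Submodule ℂ V) (m : ℤ) : grW W m →ₗ[ℂ] V ⧸ W (m - 1) :=
  (comap (W m).subtype (W (m - 1))).mapQ (W (m - 1)) (W m).subtype le_rfl

lemma grEmb_injective (m : ℤ) : Function.Injective (grEmb W m) := by
  rw [← LinearMap.ker_eq_bot, grEmb, ker_mapQ, ← LinearMap.le_ker_iff_map, ker_mkQ]

lemma map_grEmb_grFil (S : ℤ → Submodule ℂ V) (m p : ℤ) :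
    (grFil W S m p).map (grEmb W m) = grPart W m (S p) := by
  rw [grFil, ← map_comp, grEmb, mapQ_mkQ, map_comp, map_comap_subtype, inf_comm, grPart]

lemma map_grEmb_top (m : ℤ) : (⊤ : Submodule ℂ (grW W m)).map (grEmb W m) = grPart W m ⊤ := by
  have : grFil W (fun _ => ⊤) m 0 = ⊤ := by simp [grFil]
  rw [← this, map_grEmb_grFil]

namespace IsMHS

lemma grPart_iSupIndep (h : IsMHS W F G) (m : ℤ) :
    iSupIndep fun p => grPart W m (F p) ⊓ grPart W m (G (m - p)) := by
  simpa only [Submodule.map_inf _ (grEmb_injective m), map_grEmb_grFil] using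
    (grEmb W m).iSupIndep_map (grEmb_injective m) (h.pure m).submodule_iSupIndep

lemma iSup_grPart (h : IsMHS W F G) (m : ℤ) :
    ⨆ p, grPart W m (F p) ⊓ grPart W m (G (m - p)) = grPart W m ⊤ := by
  rw [← map_grEmb_top, ← (h.pure m).submodule_iSup_eq_top, Submodule.map_iSup]
  simp only [Submodule.map_inf _ (grEmb_injective m), map_grEmb_grFil]

lemma inf_sup_le_of_lt_add (h : IsMHS W F G) {m p q : ℤ} (hpq : m < p + q) :
    F p ⊓ W m ⊓ (G q ⊔ W (m - 1)) ≤ W (m - 1) := by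
  have hW : W (m - 1) ≤ W m := h.monoW (by omega)
  set X := F p ⊓ W m ⊓ (G q ⊔ W (m - 1))
  have hXF : grPart W m X ≤ grPart W m (F p) := grPart_mono (inf_le_left.trans inf_le_left)
  have hXG : grPart W m X ≤ grPart W m (G q) :=
    (grPart_le_grPart_iff hW).2 (inf_le_left.trans inf_le_right)
  -- the class of `X` lies in the Hodge pieces `H^{p, m-p}` and `H^{m-q, q}`, which are distinct
  have hdisj := (h.grPart_iSupIndep m).pairwiseDisjoint (show p ≠ m - q by omega)
  rw [Function.onFun, sub_sub_cancel] at hdisj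
  have hX : grPart W m X = ⊥ := eq_bot_iff.2 <| (le_inf
    (le_inf hXF (hXG.trans (grPart_mono (h.antiG (by omega)))))
    (le_inf (hXF.trans (grPart_mono (h.antiF (by omega)))) hXG)).trans hdisj.le_bot
  exact (le_inf le_rfl (inf_le_left.trans inf_le_right)).trans (grPart_eq_bot_iff.1 hX)

-- `F` and `G` are `m`-opposed on `Gr^W_m`, i.e. `Gr^W_m = F^p + G^{m-p+1}`.
lemma le_inf_sup_inf_sup (h : IsMHS W F G) (m p : ℤ) :
    W m ≤ F p ⊓ W m ⊔ G (m - p + 1) ⊓ W m ⊔ W (m - 1) := by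
  have hW : W (m - 1) ≤ W m := h.monoW (by omega)
  have hgr : grPart W m ⊤ ≤ grPart W m (F p ⊓ W m ⊔ G (m - p + 1) ⊓ W m) := by
    rw [← h.iSup_grPart m]
    refine iSup_le fun r => ?_
    rcases le_or_gt p r with hr | hr
    · refine inf_le_left.trans ((grPart_le_grPart_iff hW).2 ?_)
      exact (inf_le_inf_right _ (h.antiF hr)).trans (le_sup_left.trans le_sup_left)
    · refine inf_le_right.trans ((grPart_le_grPart_iff hW).2 ?_)
      exact (inf_le_inf_right _ (h.antiG (by omega))).trans (le_sup_right.trans le_sup_left)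
  simpa using (grPart_le_grPart_iff hW).1 hgr

lemma inf_staircase_eq_bot (h : IsMHS W F G) {p b n : ℤ} (hn : n < p + b) :
    F p ⊓ staircase W G b n = ⊥ := by
  refine induction_of_eq_bot h.monoW h.w_bot
    (P := fun n => ∀ b, n < p + b → F p ⊓ staircase W G b n = ⊥) ?_ ?_ n b hn
  · intro n hn b _
    exact le_bot_iff.1 (inf_le_right.trans (hn ▸ staircase_le h.monoW b n))
  · intro n ih b hb
    -- `F^p ∩ G^b = 0` on `Gr_n`, so this drops into `W_{n-1}`,
    -- where it lies in the next lower staircase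
    have hlow : F p ⊓ staircase W G b n ≤ W (n - 1) :=
      (le_inf (inf_le_inf_left _ (staircase_le h.monoW b n))
        (inf_le_right.trans (staircase_le_sup h.monoW b n))).trans (h.inf_sup_le_of_lt_add hb)
    refine eq_bot_iff.2 ((le_inf inf_le_left ?_).trans (ih (b - 1) (by omega)).le)
    exact (le_inf inf_le_right hlow).trans (staircase_inf_le h.monoW h.antiG b n)

lemma disjoint_deligneI (h : IsMHS W F G) (p q : ℤ) :
    Disjoint (deligneI W F G p q) (W (p + q - 1)) := by
  rw [disjoint_iff, eq_bot_iff, deligneI_eq,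
    ← h.inf_staircase_eq_bot (p := p) (b := q) (n := p + q - 1) (by omega)]
  exact le_inf (inf_le_left.trans (inf_le_left.trans inf_le_left))
    ((inf_le_inf_right _ inf_le_right).trans (sup_staircase_inf_le h.monoW _ _))

lemma inf_sup_le_sup (h : IsMHS W F G) {p n : ℤ} {S : Submodule ℂ V}
    (hS : ∀ k ≤ n - 1, G (k - p + 1) ⊓ W k ≤ S) {k : ℤ} (hk : k ≤ n - 1) :
    F p ⊓ W n ⊓ (S ⊔ W k) ≤ F p ⊓ W n ⊓ S ⊔ W (n - 1) := by
  refine induction_of_eq_bot h.monoW h.w_bot (P := fun k => k ≤ n - 1 →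
    F p ⊓ W n ⊓ (S ⊔ W k) ≤ F p ⊓ W n ⊓ S ⊔ W (n - 1)) ?_ ?_ k hk
  · intro k hk _
    rw [hk, sup_bot_eq]
    exact le_sup_left
  · intro k ih hk
    -- modulo `W_{k-1}`, `W_k` is spanned by `F^p ∩ W_k`, which is absorbed,
    -- and by `G^{k-p+1} ∩ W_k ≤ S`
    have hWk : S ⊔ W k ≤ S ⊔ W (k - 1) ⊔ F p ⊓ W k := by
      refine sup_le (le_sup_left.trans le_sup_left) ((h.le_inf_sup_inf_sup k p).trans ?_)
      exact sup_le (sup_le le_sup_right ((hS k hk).trans (le_sup_left.trans le_sup_left)))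
        (le_sup_right.trans le_sup_left)
    have hFk : F p ⊓ W k ≤ F p ⊓ W n := inf_le_inf_left _ (h.monoW (by omega))
    calc F p ⊓ W n ⊓ (S ⊔ W k)
        ≤ F p ⊓ W n ⊓ (S ⊔ W (k - 1) ⊔ F p ⊓ W k) := inf_le_inf_left _ hWk
      _ = F p ⊓ W n ⊓ (S ⊔ W (k - 1)) ⊔ F p ⊓ W k := (inf_sup_assoc_of_le _ hFk).symm
      _ ≤ F p ⊓ W n ⊓ S ⊔ W (n - 1) :=
        sup_le (ih (by omega)) (inf_le_right.trans ((h.monoW hk).trans le_sup_right))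

lemma le_grPart_deligneI (h : IsMHS W F G) {p q m : ℤ} (hm : p + q = m) :
    grPart W m (F p) ⊓ grPart W m (G q) ≤ grPart W m (deligneI W F G p q) := by
  subst hm
  have hS : ∀ k ≤ p + q - 1, G (k - p + 1) ⊓ W k ≤
      G q ⊓ W (p + q) ⊔ staircase W G (q - 1) (p + q - 2) := by
    intro k hk
    refine (le_staircase (b := q) (n := p + q - 1) h.antiG hk (by omega)).trans ?_
    rw [staircase_eq, show p + q - 1 - 1 = p + q - 2 by ring]
    exact sup_le_sup_right (inf_le_inf_left _ (h.monoW (by omega))) _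
  refine grPart_inf_grPart_le.trans ((grPart_le_grPart_iff (h.monoW (by omega))).2 ?_)
  rw [deligneI_eq]
  refine le_trans ?_ (h.inf_sup_le_sup hS le_rfl)
  exact le_inf (le_inf (inf_le_left.trans inf_le_left) inf_le_right)
    (inf_le_left.trans (inf_le_right.trans (sup_le_sup_right le_sup_left _)))

lemma iSupIndep_deligneI (h : IsMHS W F G) :
    iSupIndep fun pq : ℤ × ℤ => deligneI W F G pq.1 pq.2 := by
  refine iSupIndep_of_iSupIndep_grPart (wt := fun pq => pq.1 + pq.2) h.monoW
    (fun pq => deligneI_le_W _ _) (fun pq => h.disjoint_deligneI _ _) fun m => ?_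
  have hinj : Function.Injective fun pq : {pq : ℤ × ℤ // pq.1 + pq.2 = m} => pq.1.1 := by
    rintro ⟨⟨p, q⟩, hpq⟩ ⟨⟨p', q'⟩, hpq'⟩ (rfl : p = p')
    dsimp only at hpq hpq'
    obtain rfl : q = q' := by omega
    rfl
  refine ((h.grPart_iSupIndep m).comp hinj).mono fun ⟨⟨p, q⟩, hpq⟩ => ?_
  refine (grPart_deligneI_le h.monoW hpq).trans ?_
  simp only [Function.comp_apply, ← hpq, add_sub_cancel_left, le_rfl]

lemma le_iSup_deligneI_sup (h : IsMHS W F G) (m : ℤ) :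
    W m ≤ (⨆ pq : ℤ × ℤ, ⨆ _ : pq.1 + pq.2 = m, deligneI W F G pq.1 pq.2) ⊔ W (m - 1) := by
  have hW : W (m - 1) ≤ W m := h.monoW (by omega)
  have hgr : grPart W m ⊤ ≤
      grPart W m (⨆ pq : ℤ × ℤ, ⨆ _ : pq.1 + pq.2 = m, deligneI W F G pq.1 pq.2) := by
    rw [← h.iSup_grPart m]
    exact iSup_le fun p => (h.le_grPart_deligneI (add_sub_cancel p m)).trans
      (grPart_mono (le_iSup₂_of_le (p, m - p) (add_sub_cancel p m) le_rfl))
  simpa using (grPart_le_grPart_iff hW).1 hgr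

end IsMHS

end Deligne

/-- Deligne's splitting: for a mixed Hodge structure `(V, W, F)` (with conjugate
Hodge filtration `G = F̄`), the subspaces
`I^{p,q} = (F^p ∩ W_{p+q}) ∩ ((F̄^q ∩ W_{p+q}) + Σ_{i>0} (F̄^{q-i} ∩ W_{p+q-1-i}))`
satisfy `V_ℂ = ⊕_{p,q} I^{p,q}` and `W_m V_ℂ = ⊕_{p+q ≤ m} I^{p,q}`. -/
theorem deligne_splitting {V : Type} [AddCommGroup V] [Module ℂ V]
    (W F G : ℤ → Submodule ℂ V) (h : IsMHS W F G) :
    DirectSum.IsInternal (fun pq : ℤ × ℤ => deligneI W F G pq.1 pq.2) ∧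
      ∀ m : ℤ, W m = ⨆ pq : ℤ × ℤ, ⨆ _ : pq.1 + pq.2 ≤ m, deligneI W F G pq.1 pq.2 := by
  have hspan := eq_iSup_of_le_sup h.monoW h.w_bot (fun pq : ℤ × ℤ => deligneI_le_W pq.1 pq.2)
    h.le_iSup_deligneI_sup
  refine ⟨?_, hspan⟩
  rw [DirectSum.isInternal_submodule_iff_iSupIndep_and_iSup_eq_top]
  refine ⟨h.iSupIndep_deligneI, eq_top_iff.2 ?_⟩
  obtain ⟨b, hb⟩ := h.w_top
  rw [← hb, hspan b]
  exact iSup_mono fun pq => iSup_le fun _ => le_rfl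
end

section
/- Let H = {H_1, …, H_k} be linear subspaces of ℂ^n such that for every subset S ⊆ {1,…,k}, the intersection H_S = ∩_{i∈S} H_i has codimension d·|S|. Then the mixed Hodge structure on H^r(ℂ^n − ∪_i H_i, ℚ) is pure: Gr^W_m H^r = 0 unless m = 2dr/(2d−1); equivalently, H^r vanishes unless (2d−1) divides dr, and is pure of weight 2dr/(2d−1) otherwise. -/
/-- An abstract "weight-graded cohomology theory" for complements of arrangements of
linear subspaces:  `vanish V L r m` asserts the vanishing `Gr^W_m H^r(U, ℚ) = 0` of
the `m`-th weight-graded piece of Deligne's mixed Hodge structure on the degree-`r`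
rational cohomology of the complement `U = V − ∪ L` of the union of the subspaces
in the list `L` inside the complex affine space `V`.  The axioms record:
* the cohomology of affine space itself (`H^*(V) = ℚ`, in degree `0` and weight `0`),
* invariance under linear isomorphisms, and
* the consequence, on weight-graded pieces, of the Gysin long exact sequence of
  mixed Hodge structures
  `… → H^{r−2d}(Z)(−d) → H^r(X) → H^r(U) → H^{r+1−2d}(Z)(−d) → …`
  for the smooth closed subvariety `Z = H − ∪(L ∩ H)` of codimension `d` in
  `X = V − ∪ L`, with open complement `U = V − ∪(L ∪ {H})`; the Tate twist `(−d)`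
  raises weights by `2d`, and since morphisms of mixed Hodge structures are strict,
  vanishing of the two outer weight-graded terms forces vanishing of the middle one. -/
structure GrWeightCohomology where
  vanish : ∀ (V : Type) [AddCommGroup V] [Module ℂ V],
    List (Submodule ℂ V) → ℤ → ℤ → Prop
  base : ∀ (V : Type) [AddCommGroup V] [Module ℂ V] [FiniteDimensional ℂ V]
    (r m : ℤ), ¬(r = 0 ∧ m = 0) → vanish V [] r m
  invariance : ∀ (V V' : Type) [AddCommGroup V] [Module ℂ V]
    [AddCommGroup V'] [Module ℂ V'] (e : V ≃ₗ[ℂ] V')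
    (L : List (Submodule ℂ V)) (r m : ℤ),
    vanish V L r m → vanish V' (L.map (Submodule.map (e : V →ₗ[ℂ] V'))) r m
  gysin : ∀ (V : Type) [AddCommGroup V] [Module ℂ V] [FiniteDimensional ℂ V]
    (L : List (Submodule ℂ V)) (H : Submodule ℂ V) (d : ℕ),
    Module.finrank ℂ ↥H + d = Module.finrank ℂ V →
    ∀ r m : ℤ,
      vanish V L r m →
      vanish ↥H (L.map fun K => Submodule.comap H.subtype K)
        (r + 1 - 2 * (d : ℤ)) (m - 2 * (d : ℤ)) →
      vanish V (L ++ [H]) r m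

lemma aux_pure (T : GrWeightCohomology) (d : ℕ) (hd : 0 < d) :
    ∀ (k : ℕ) (V : Type) [AddCommGroup V] [Module ℂ V] [FiniteDimensional ℂ V]
      (H : Fin k → Submodule ℂ V),
      (∀ S : Finset (Fin k),
        Module.finrank ℂ ↥(⨅ i ∈ S, H i) + d * S.card = Module.finrank ℂ V) →
      ∀ r m : ℤ, m * (2 * (d : ℤ) - 1) ≠ 2 * (d : ℤ) * r →
      T.vanish V (List.ofFn H) r m := by
  intro k
  induction k with
  | zero =>
    intro V _ _ _ H hcodim r m hm
    simp only [List.ofFn_zero]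
    exact T.base V r m (by rintro ⟨rfl, rfl⟩; simp at hm)
  | succ k IH =>
    intro V _ _ _ H hcodim r m hm
    set p : Submodule ℂ V := H (Fin.last k) with hp
    have hlast : Module.finrank ℂ ↥p + d = Module.finrank ℂ V := by
      have h := hcodim {Fin.last k}
      rw [Finset.iInf_singleton] at h
      simpa using h
    have key : ∀ S : Finset (Fin k),
        p ⊓ (⨅ i ∈ S, H i.castSucc) =
          ⨅ j ∈ insert (Fin.last k) (S.image Fin.castSucc), H j := by
      intro S
      rw [Finset.iInf_insert, Finset.iInf_finset_image]
    have hcard : ∀ S : Finset (Fin k),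
        (insert (Fin.last k) (S.image Fin.castSucc)).card = S.card + 1 := by
      intro S
      rw [Finset.card_insert_of_notMem, Finset.card_image_of_injective _ (Fin.castSucc_injective k)]
      simp only [Finset.mem_image]
      rintro ⟨i, -, hi⟩
      exact (Fin.castSucc_lt_last i).ne hi
    have hcodim' : ∀ S : Finset (Fin k),
        Module.finrank ℂ ↥(⨅ i ∈ S, Submodule.comap p.subtype (H i.castSucc))
          + d * S.card = Module.finrank ℂ ↥p := by
      intro S
      have h1 : (⨅ i ∈ S, Submodule.comap p.subtype (H i.castSucc)) =
          Submodule.comap p.subtype (⨅ i ∈ S, H i.castSucc) := by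
        simp [Submodule.comap_iInf]
      have h2 : Module.finrank ℂ ↥(Submodule.comap p.subtype (⨅ i ∈ S, H i.castSucc)) =
          Module.finrank ℂ ↥(p ⊓ (⨅ i ∈ S, H i.castSucc)) := by
        rw [← Submodule.map_comap_subtype]
        exact (Submodule.equivMapOfInjective p.subtype p.injective_subtype _).finrank_eq
      have h3 := hcodim (insert (Fin.last k) (S.image Fin.castSucc))
      rw [hcard S, mul_add, mul_one] at h3
      rw [h1, h2, key S]
      omega
    have hrec := IH ↥p (fun i => Submodule.comap p.subtype (H i.castSucc)) hcodim'
      (r + 1 - 2 * (d : ℤ)) (m - 2 * (d : ℤ))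
      (by intro h; apply hm; linear_combination h)
    have hout := IH V (fun i => H i.castSucc)
      (by intro S
          have := hcodim (S.image Fin.castSucc)
          rwa [Finset.iInf_finset_image,
            Finset.card_image_of_injective _ (Fin.castSucc_injective k)] at this)
      r m hm
    have := T.gysin V (List.ofFn fun i => H i.castSucc) p d hlast r m hout
      (by rw [List.map_ofFn]; exact hrec)
    rw [List.ofFn_succ']
    simpa using this

/-- Let `H = {H_1, …, H_k}` be linear subspaces of `ℂ^n` such that for every subset
`S ⊆ {1,…,k}` the intersection `H_S = ∩_{i∈S} H_i` has codimension `d·|S|`.  Then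
the mixed Hodge structure on `H^r(ℂ^n − ∪_i H_i, ℚ)` is pure of weight
`2dr/(2d−1)`: the weight-graded piece `Gr^W_m H^r` vanishes unless
`m·(2d−1) = 2d·r`. -/
theorem subspace_arrangement_complement_pure
    (T : GrWeightCohomology) (n k d : ℕ) (hd : 0 < d)
    (H : Fin k → Submodule ℂ (Fin n → ℂ))
    (hcodim : ∀ S : Finset (Fin k),
      Module.finrank ℂ ↥(⨅ i ∈ S, H i) + d * S.card = n)
    (r m : ℤ) (hm : m * (2 * (d : ℤ) - 1) ≠ 2 * (d : ℤ) * r) :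
    T.vanish (Fin n → ℂ) (List.ofFn H) r m := by
  apply aux_pure T d hd k _ H _ r m hm
  intro S
  rw [hcodim S]
  simp [Module.finrank_pi]
end
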